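/- arXiv:1405.7536 — 13 statements merged into one kernel-verified Lean document; each statement's English description precedes it below -/
import Mathlib

section
/- For a finite nonempty subset A of a commutative group Z, we have σ(A) = 1 if and only if A is a coset of some finite subgroup of Z, where σ(A) = |A+A|/|A| is the doubling constant. -/
open Pointwise

theorem stmt_0 {Z : Type*} [AddCommGroup Z] [DecidableEq Z] (A : Finset Z)
    (hA : A.Nonempty) :
    (A + A).card = A.card ↔
      ∃ (H : AddSubgroup Z) (z : Z), (H : Set Z).Finite ∧ (A : Set Z) = z +ᵥ (H : Set Z) := by
  obtain ⟨a, ha⟩ := hA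
  constructor
  · intro hcard
    -- a +ᵥ A ⊆ A + A with equal cards, so equal
    have hsub : a +ᵥ A ⊆ A + A := by
      intro x hx
      rw [Finset.mem_vadd_finset] at hx
      obtain ⟨y, hy, rfl⟩ := hx
      exact Finset.add_mem_add ha hy
    have heq : a +ᵥ A = A + A :=
      Finset.eq_of_subset_of_card_le hsub (by rw [hcard, Finset.card_vadd_finset])
    have key : ∀ x ∈ A, ∀ y ∈ A, ∃ u ∈ A, x + y = a + u := by
      intro x hx y hy
      have : x + y ∈ a +ᵥ A := heq ▸ Finset.add_mem_add hx hy
      rw [Finset.mem_vadd_finset] at this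
      obtain ⟨u, hu, h⟩ := this
      exact ⟨u, hu, h.symm⟩
    -- the carrier
    have addmem : ∀ {s t : Z}, s + a ∈ A → t + a ∈ A → s + t + a ∈ A := by
      intro s t hs ht
      obtain ⟨u, hu, h⟩ := key _ hs _ ht
      have : u = s + t + a := by
        have : s + a + (t + a) = a + (s + t + a) := by abel
        rw [this] at h
        exact (add_right_injective a h).symm
      rwa [← this]
    have negmem : ∀ {s : Z}, s + a ∈ A → -s + a ∈ A := by
      intro s hs
      -- map u ↦ u + s sends A into A, injective hence surjective
      have hmaps : ∀ u ∈ A, u + s ∈ A := by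
        intro u hu
        obtain ⟨v, hv, h⟩ := key _ hu _ hs
        have : v = u + s := by
          have : u + (s + a) = a + (u + s) := by abel
          rw [this] at h
          exact (add_right_injective a h).symm
        rwa [← this]
      have hsurj : ∀ b ∈ A, ∃ u ∈ A, u + s = b := by
        intro b hb
        have hinj : Set.InjOn (· + s) A := fun x _ y _ h => by simpa using h
        have := Finset.surj_on_of_inj_on_of_card_le (s := A) (t := A)
          (f := fun u _ => u + s) (fun u hu => hmaps u hu)
          (fun u v hu hv h => hinj hu hv h) le_rfl b hb
        obtain ⟨u, hu, h⟩ := this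
        exact ⟨u, hu, h.symm⟩
      obtain ⟨u, hu, h⟩ := hsurj a ha
      have : u = -s + a := by rw [← h]; abel
      rwa [← this]
    refine ⟨{ carrier := {x | x + a ∈ A},
              add_mem' := fun hs ht => addmem hs ht,
              zero_mem' := by simpa using ha,
              neg_mem' := fun hs => negmem hs }, a, ?_, ?_⟩
    · apply Set.Finite.ofFinset ((-a) +ᵥ A)
      intro x
      simp only [Finset.mem_vadd_finset, AddSubgroup.coe_set_mk, Set.mem_setOf_eq,
        vadd_eq_add]
      constructor
      · rintro ⟨y, hy, rfl⟩
        simpa [add_assoc, add_comm] using hy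
      · intro hx
        exact ⟨x + a, hx, by abel⟩
    · ext x
      simp only [Finset.coe_sort_coe, Set.mem_vadd_set, AddSubgroup.coe_set_mk,
        Set.mem_setOf_eq, vadd_eq_add, Finset.mem_coe]
      constructor
      · intro hx
        exact ⟨x - a, by simpa using hx, by abel⟩
      · rintro ⟨y, hy, rfl⟩
        simpa [add_comm] using hy
  · rintro ⟨H, z, hfin, hAz⟩
    have : A + A = z +ᵥ A := by
      apply Finset.coe_injective
      push_cast
      rw [hAz]
      ext x
      simp only [Set.mem_add, Set.mem_vadd_set, vadd_eq_add]
      constructor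
      · rintro ⟨u, ⟨h1, h1H, rfl⟩, v, ⟨h2, h2H, rfl⟩, rfl⟩
        exact ⟨z + (h1 + h2), ⟨h1 + h2, add_mem h1H h2H, rfl⟩, by abel⟩
      · rintro ⟨u, ⟨h1, h1H, rfl⟩, rfl⟩
        exact ⟨z + h1, ⟨h1, h1H, rfl⟩, z + 0, ⟨0, zero_mem H, rfl⟩, by abel⟩
    rw [this, Finset.card_vadd_finset]
end

section
/- For a finite nonempty subset A of a commutative group Z, δ(A) ≤ σ(A)² with equality if and only if σ(A) = 1, where σ(A) = |A+A|/|A| and δ(A) = |A−A|/|A|. Equivalently: |A|·|A−A| = |A+A|² if and only if |A+A| = |A|. -/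
open Pointwise

theorem stmt_4 {Z : Type*} [AddCommGroup Z] [DecidableEq Z] (A : Finset Z)
    (hA : A.Nonempty) :
    A.card * (A - A).card ≤ (A + A).card ^ 2 ∧
      (A.card * (A - A).card = (A + A).card ^ 2 ↔ (A + A).card = A.card) := by
  classical
  obtain ⟨a0, ha0⟩ := hA
  have h1 : A.card * (A - A).card ≤ (A + A).card ^ 2 := by
    have := Finset.ruzsa_triangle_inequality_sub_add_add A A A
    rw [sq]; rw [mul_comm] at this; exact this
  refine ⟨h1, ?_, ?_⟩
  · -- hard direction : equality implies #(A+A) = #A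
    intro heq
    have hrep : ∀ d ∈ A - A, ∃ p : Z × Z, p.1 ∈ A ∧ p.2 ∈ A ∧ p.1 - p.2 = d := by
      intro d hd
      obtain ⟨x, hx, y, hy, hxy⟩ := Finset.mem_sub.1 hd
      exact ⟨(x, y), hx, hy, hxy⟩
    choose! f hf1 hf2 hf3 using hrep
    set F : Z × Z → Z × Z := fun p => ((f p.1).1 + p.2, (f p.1).2 + p.2) with hF
    have hmaps : ∀ p ∈ (A - A) ×ˢ A, F p ∈ (A + A) ×ˢ (A + A) := by
      rintro ⟨d, c⟩ hp
      obtain ⟨hd, hc⟩ := Finset.mem_product.1 hp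
      exact Finset.mem_product.2 ⟨Finset.add_mem_add (hf1 d hd) hc,
        Finset.add_mem_add (hf2 d hd) hc⟩
    have hinj : Set.InjOn F ((A - A) ×ˢ A : Finset (Z × Z)) := by
      rintro ⟨d1, c1⟩ hp1 ⟨d2, c2⟩ hp2 h
      have hd1 := (Finset.mem_product.1 (Finset.mem_coe.1 hp1)).1
      have hd2 := (Finset.mem_product.1 (Finset.mem_coe.1 hp2)).1
      have e1 : (f d1).1 + c1 = (f d2).1 + c2 := congrArg Prod.fst h
      have e2 : (f d1).2 + c1 = (f d2).2 + c2 := congrArg Prod.snd h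
      have hd : d1 = d2 := by
        rw [← hf3 d1 hd1, ← hf3 d2 hd2]
        have := congrArg₂ (· - ·) e1 e2
        simpa [sub_sub_sub_cancel_right] using this
      subst hd
      have : c1 = c2 := by exact add_left_cancel e1
      simp [this]
    have himg : ((A - A) ×ˢ A).image F = (A + A) ×ˢ (A + A) := by
      apply Finset.eq_of_subset_of_card_le
      · intro x hx
        obtain ⟨p, hp, rfl⟩ := Finset.mem_image.1 hx
        exact hmaps p hp
      · rw [Finset.card_image_of_injOn hinj, Finset.card_product, Finset.card_product,
          mul_comm (A - A).card]
        rw [← sq, ← heq]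
    have h0 : (0 : Z) ∈ A - A := Finset.mem_sub.2 ⟨a0, ha0, a0, ha0, sub_self a0⟩
    have hsub : A + A ⊆ {(f 0).1} + A := by
      intro x hx
      have hx2 : (x, x) ∈ ((A - A) ×ˢ A).image F := by
        rw [himg]; exact Finset.mem_product.2 ⟨hx, hx⟩
      obtain ⟨⟨d, c⟩, hp, hFp⟩ := Finset.mem_image.1 hx2
      have hd := (Finset.mem_product.1 hp).1
      have hc := (Finset.mem_product.1 hp).2
      have e1 : (f d).1 + c = x := congrArg Prod.fst hFp
      have e2 : (f d).2 + c = x := congrArg Prod.snd hFp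
      have hab : (f d).1 = (f d).2 := add_right_cancel (e1.trans e2.symm)
      have hd0 : d = 0 := by rw [← hf3 d hd, hab, sub_self]
      subst hd0
      exact Finset.mem_add.2 ⟨(f 0).1, Finset.mem_singleton_self _, c, hc, e1⟩
    have hle : (A + A).card ≤ A.card := by
      calc (A + A).card ≤ ({(f 0).1} + A).card := Finset.card_le_card hsub
        _ = A.card := Finset.card_singleton_add _ _
    exact le_antisymm hle (Finset.card_le_card_add_left ⟨a0, ha0⟩)
  · -- easy direction
    intro h
    have hAA : ∀ b ∈ A, {b} + A = A + A := by
      intro b hb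
      apply Finset.eq_of_subset_of_card_le
      · intro x hx
        obtain ⟨y, hy, z, hz, rfl⟩ := Finset.mem_add.1 hx
        exact Finset.add_mem_add (Finset.mem_singleton.1 hy ▸ hb) hz
      · rw [Finset.card_singleton_add, h]
    have hsub : A - A ⊆ A - {a0} := by
      intro x hx
      obtain ⟨a, ha, b, hb, rfl⟩ := Finset.mem_sub.1 hx
      have : a + a0 ∈ {b} + A := by
        rw [hAA b hb]; exact Finset.add_mem_add ha ha0
      obtain ⟨y, hy, z, hz, hyz⟩ := Finset.mem_add.1 this
      rw [Finset.mem_singleton.1 hy] at hyz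
      refine Finset.mem_sub.2 ⟨z, hz, a0, Finset.mem_singleton_self _, ?_⟩
      rw [sub_eq_sub_iff_add_eq_add, ← hyz, add_comm]
    have hcard : (A - A).card = A.card := by
      refine le_antisymm ?_ ?_
      · calc (A - A).card ≤ (A - {a0}).card := Finset.card_le_card hsub
          _ = A.card := by
            rw [Finset.sub_singleton]
            exact Finset.card_image_of_injective _ (sub_left_injective)
      · exact Finset.card_le_card_sub_left ⟨a0, ha0⟩
    rw [hcard, h, sq]
end

section
/- (Petridis' lemma) Let A, X be finite nonempty subsets of a commutative group Z and K a real number with |A+X| = K·|X| and |A+X'| ≥ K·|X'| for all nonempty subsets X' ⊆ X. Then for every finite subset C of Z, |A+X+C| ≤ K·|X+C|. -/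
open Pointwise

theorem stmt_5 {Z : Type*} [AddCommGroup Z] [DecidableEq Z] (A X : Finset Z)
    (hA : A.Nonempty) (hX : X.Nonempty) (K : ℝ)
    (hK : ((A + X).card : ℝ) = K * X.card)
    (h : ∀ X' ⊆ X, X'.Nonempty → K * X'.card ≤ ((A + X').card : ℝ)) :
    ∀ C : Finset Z, ((A + X + C).card : ℝ) ≤ K * (X + C).card := by
  have hXc : (0:ℝ) < X.card := by
    exact_mod_cast Finset.card_pos.mpr hX
  have hK0 : 0 ≤ K := by
    have h0 : (0:ℝ) ≤ ((A + X).card : ℝ) := Nat.cast_nonneg _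
    nlinarith [h0, hXc]
  have h' : ∀ X' ⊆ X, K * X'.card ≤ ((A + X').card : ℝ) := by
    intro X' hX'
    rcases X'.eq_empty_or_nonempty with rfl | hne
    · simp
    · exact h X' hX' hne
  intro C
  induction C using Finset.induction_on with
  | empty => simp
  | @insert z C' hz ih =>
    classical
    set X1 : Finset Z := X.filter (fun x => ∀ a ∈ A, a + (x + z) ∈ A + X + C') with hX1def
    set Y : Finset Z := X.filter (fun x => x + z ∈ X + C') with hYdef
    have hX1X : X1 ⊆ X := Finset.filter_subset _ _
    have hYX1 : Y ⊆ X1 := by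
      intro x hx
      rw [hYdef, Finset.mem_filter] at hx
      rw [hX1def, Finset.mem_filter]
      refine ⟨hx.1, fun a ha => ?_⟩
      rcases Finset.mem_add.mp hx.2 with ⟨x', hx', c', hc', hxc⟩
      exact Finset.mem_add.mpr ⟨a + x', Finset.add_mem_add ha hx', c', hc',
        by rw [← hxc]; abel⟩
    -- translation inclusion : A + X1 + {z} ⊆ A + X + C'
    have hsub1 : A + X1 + {z} ⊆ A + X + C' := by
      intro w hw
      rcases Finset.mem_add.mp hw with ⟨u, hu, t, ht, huw⟩
      rcases Finset.mem_add.mp hu with ⟨a, ha, x, hx, haxu⟩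
      rw [Finset.mem_singleton] at ht
      rw [hX1def, Finset.mem_filter] at hx
      have := hx.2 a ha
      rw [← huw, ← haxu, ht]
      convert this using 1
      abel
    -- key covering
    have hcover : A + X + insert z C' ⊆ (A + X + C') ∪ ((A + X + {z}) \ (A + X1 + {z})) := by
      intro w hw
      rcases Finset.mem_add.mp hw with ⟨u, hu, c, hc, hw'⟩
      rcases Finset.mem_insert.mp hc with hc0 | hc'
      · rw [hc0] at hw'
        by_cases hcase : w ∈ A + X1 + {z}
        · exact Finset.mem_union_left _ (hsub1 hcase)
        · refine Finset.mem_union_right _ (Finset.mem_sdiff.mpr ⟨?_, hcase⟩)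
          exact Finset.mem_add.mpr ⟨u, hu, z, Finset.mem_singleton_self z, hw'⟩
      · exact Finset.mem_union_left _ (Finset.mem_add.mpr ⟨u, hu, c, hc', hw'⟩)
    have hsubset12 : A + X1 + {z} ⊆ A + X + {z} :=
      Finset.add_subset_add_right (Finset.add_subset_add_left hX1X)
    have htrans : ∀ S : Finset Z, (S + {z}).card = S.card := by
      intro S
      rw [Finset.add_singleton]
      exact Finset.card_image_of_injective _ (add_left_injective z)
    -- numerator bound
    have hnum : ((A + X + insert z C').card : ℝ)
        ≤ (A + X + C').card + (A + X).card - (A + X1).card := by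
      have h1 : (A + X + insert z C').card
          ≤ (A + X + C').card + ((A + X + {z}) \ (A + X1 + {z})).card := by
        calc (A + X + insert z C').card
            ≤ ((A + X + C') ∪ ((A + X + {z}) \ (A + X1 + {z}))).card :=
              Finset.card_le_card hcover
          _ ≤ _ := Finset.card_union_le _ _
      have h2 : ((A + X + {z}) \ (A + X1 + {z})).card
          = (A + X + {z}).card - (A + X1 + {z}).card := Finset.card_sdiff_of_subset hsubset12
      have h3 := Finset.card_le_card hsubset12
      have h4 := htrans (A + X)
      have h5 := htrans (A + X1)
      have hN : (A + X + insert z C').card + (A + X1).card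
          ≤ (A + X + C').card + (A + X).card := by omega
      have := (Nat.cast_le (α := ℝ)).mpr hN
      push_cast at this
      linarith
    -- denominator bound
    have hdis : Disjoint (X + C') ((X + {z}) \ (Y + {z})) := by
      rw [Finset.disjoint_right]
      intro w hw hw2
      rcases Finset.mem_sdiff.mp hw with ⟨hw1, hw3⟩
      apply hw3
      rcases Finset.mem_add.mp hw1 with ⟨x, hx, t, ht, hxt⟩
      rw [Finset.mem_singleton] at ht
      have hxY : x ∈ Y := by
        rw [hYdef, Finset.mem_filter]
        exact ⟨hx, by rw [← ht, hxt]; exact hw2⟩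
      exact Finset.mem_add.mpr ⟨x, hxY, t, by rw [ht]; exact Finset.mem_singleton_self z, hxt⟩
    have hcover2 : (X + C') ∪ ((X + {z}) \ (Y + {z})) ⊆ X + insert z C' := by
      apply Finset.union_subset
      · exact Finset.add_subset_add_left (Finset.subset_insert _ _)
      · intro w hw
        rcases Finset.mem_sdiff.mp hw with ⟨hw1, _⟩
        rcases Finset.mem_add.mp hw1 with ⟨x, hx, t, ht, hxt⟩
        rw [Finset.mem_singleton] at ht
        exact Finset.mem_add.mpr ⟨x, hx, t, by rw [ht]; exact Finset.mem_insert_self z C', hxt⟩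
    have hYsub : Y + {z} ⊆ X + {z} :=
      Finset.add_subset_add_right (Finset.filter_subset _ _)
    have hden : ((X + C').card : ℝ) + X.card - Y.card ≤ (X + insert z C').card := by
      have h1 : (X + C').card + ((X + {z}) \ (Y + {z})).card ≤ (X + insert z C').card := by
        rw [← Finset.card_union_of_disjoint hdis]
        exact Finset.card_le_card hcover2
      have h2 : ((X + {z}) \ (Y + {z})).card = (X + {z}).card - (Y + {z}).card :=
        Finset.card_sdiff_of_subset hYsub
      have h3 := Finset.card_le_card hYsub
      have h4 := htrans X
      have h5 := htrans Y
      have hN : (X + C').card + X.card ≤ (X + insert z C').card + Y.card := by omega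
      have := (Nat.cast_le (α := ℝ)).mpr hN
      push_cast at this
      linarith
    have hX1bound := h' X1 hX1X
    have hYle : (Y.card : ℝ) ≤ X1.card := by exact_mod_cast Finset.card_le_card hYX1
    calc ((A + X + insert z C').card : ℝ)
        ≤ (A + X + C').card + (A + X).card - (A + X1).card := hnum
      _ ≤ K * (X + C').card + K * X.card - K * X1.card := by linarith [ih]
      _ ≤ K * ((X + C').card + X.card - Y.card) := by nlinarith
      _ ≤ K * (X + insert z C').card := by nlinarith
end

section
/- (Equality case of Petridis' lemma, sufficiency) Let A, X be finite nonempty subsets of a commutative group Z with |A+X| = K·|X|. Let C be a finite subset and suppose there exists Q ⊆ C with X+C = X+Q and |A+X+Q| = |A+X|·|Q| (i.e., A+X and Q are independent). Then |A+X+C| = K·|X+C|. -/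
open Pointwise

theorem stmt_6 {Z : Type*} [AddCommGroup Z] [DecidableEq Z] (A X C : Finset Z)
    (hA : A.Nonempty) (hX : X.Nonempty) (K : ℝ)
    (hK : ((A + X).card : ℝ) = K * X.card)
    (Q : Finset Z) (hQC : Q ⊆ C) (hXC : X + C = X + Q)
    (hind : (A + X + Q).card = (A + X).card * Q.card) :
    ((A + X + C).card : ℝ) = K * (X + C).card := by
  obtain ⟨a0, ha0⟩ := hA
  have himg : ((A + X) ×ˢ Q).image (fun p : Z × Z => p.1 + p.2) = A + X + Q :=
    Finset.image_add_product
  have hinj : Set.InjOn (fun p : Z × Z => p.1 + p.2) (((A + X) ×ˢ Q : Finset (Z × Z)) : Set (Z × Z)) := by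
    rw [← Finset.card_image_iff, himg, hind, Finset.card_product]
  have hXQ : (X + Q).card = X.card * Q.card := by
    rw [← Finset.image_add_product, Finset.card_image_of_injOn, Finset.card_product]
    intro p hp p' hp' h
    simp only [Finset.coe_product, Set.mem_prod, Finset.mem_coe] at hp hp'
    have h1 : ((a0 + p.1, p.2) : Z × Z) ∈ (((A + X) ×ˢ Q : Finset (Z × Z)) : Set (Z × Z)) := by
      simp only [Finset.coe_product, Set.mem_prod, Finset.mem_coe]
      exact ⟨Finset.add_mem_add ha0 hp.1, hp.2⟩
    have h2 : ((a0 + p'.1, p'.2) : Z × Z) ∈ (((A + X) ×ˢ Q : Finset (Z × Z)) : Set (Z × Z)) := by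
      simp only [Finset.coe_product, Set.mem_prod, Finset.mem_coe]
      exact ⟨Finset.add_mem_add ha0 hp'.1, hp'.2⟩
    have heq : ((a0 + p.1, p.2) : Z × Z) = (a0 + p'.1, p'.2) := by
      apply hinj h1 h2
      simp only
      simp only at h
      rw [add_assoc, h, add_assoc]
    simp only [Prod.mk.injEq] at heq
    exact Prod.ext_iff.mpr ⟨add_left_cancel heq.1, heq.2⟩
  have hACQ : A + X + C = A + X + Q := by
    rw [add_assoc, hXC, add_assoc]
  rw [hACQ, hXC, hind, hXQ]
  push_cast
  rw [hK]
  ring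
end

section
/- (Equality case of Petridis' lemma, necessity) Let A, X be finite nonempty subsets of a commutative group Z with |A+X| = K·|X| and |A+X'| > K·|X'| for all proper nonempty subsets X' ⊊ X. If C is a finite subset with |A+X+C| = K·|X+C|, then there exists Q ⊆ C such that X+C = X+Q and |A+X+Q| = |A+X|·|Q|. -/
open Pointwise

namespace PetridisAux

variable {Z : Type*} [AddCommGroup Z] [DecidableEq Z]

lemma add_insert' (s t : Finset Z) (c : Z) :
    s + insert c t = (s + t) ∪ s.image (· + c) := by
  ext z
  simp only [Finset.mem_add, Finset.mem_union, Finset.mem_image, Finset.mem_insert]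
  constructor
  · rintro ⟨x, hx, y, (rfl | hy), rfl⟩
    · exact Or.inr ⟨x, hx, rfl⟩
    · exact Or.inl ⟨x, hx, y, hy, rfl⟩
  · rintro (⟨x, hx, y, hy, rfl⟩ | ⟨x, hx, rfl⟩)
    · exact ⟨x, hx, y, Or.inr hy, rfl⟩
    · exact ⟨x, hx, c, Or.inl rfl, rfl⟩

lemma card_image_add (s : Finset Z) (c : Z) : (s.image (· + c)).card = s.card :=
  Finset.card_image_of_injective s (add_left_injective c)

lemma petridis_main (A X : Finset Z) (hA : A.Nonempty) (hX : X.Nonempty) (K : ℝ)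
    (hK : ((A + X).card : ℝ) = K * X.card)
    (h : ∀ X' ⊆ X, X'.Nonempty → X' ≠ X → K * X'.card < ((A + X').card : ℝ)) :
    ∀ C : Finset Z, ((A + X + C).card : ℝ) ≤ K * (X + C).card ∧
      (((A + X + C).card : ℝ) = K * (X + C).card →
        ∃ Q ⊆ C, X + C = X + Q ∧ (A + X + Q).card = (A + X).card * Q.card) := by
  have hAX : (A + X).Nonempty := hA.add hX
  have hK0 : 0 < K := by
    have h1 : (0:ℝ) < (A + X).card := by exact_mod_cast Finset.card_pos.2 hAX
    have h2 : (0:ℝ) < X.card := by exact_mod_cast Finset.card_pos.2 hX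
    nlinarith [hK]
  intro C
  induction C using Finset.induction_on with
  | empty =>
      refine ⟨by simp, fun _ => ⟨∅, Finset.Subset.refl _, rfl, by simp⟩⟩
  | @insert c C' hc ih =>
      classical
      set Xc := X.filter (fun x => x + c ∈ X + C') with hXcdef
      have hXcX : Xc ⊆ X := Finset.filter_subset _ _
      -- structure of X + insert c C'
      have f1 : X + insert c C' = (X + C') ∪ (X \ Xc).image (· + c) := by
        rw [add_insert']
        apply Finset.Subset.antisymm
        · intro z hz
          rcases Finset.mem_union.1 hz with hz | hz
          · exact Finset.mem_union_left _ hz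
          · rcases Finset.mem_image.1 hz with ⟨x, hx, rfl⟩
            by_cases hxc : x + c ∈ X + C'
            · exact Finset.mem_union_left _ hxc
            · refine Finset.mem_union_right _ (Finset.mem_image.2 ⟨x, ?_, rfl⟩)
              exact Finset.mem_sdiff.2 ⟨hx, fun hmem => hxc (Finset.mem_filter.1 hmem).2⟩
        · apply Finset.union_subset_union (Finset.Subset.refl _)
          exact Finset.image_subset_image (Finset.sdiff_subset)
      have f2 : Disjoint (X + C') ((X \ Xc).image (· + c)) := by
        rw [Finset.disjoint_right]
        rintro z hz hz'
        rcases Finset.mem_image.1 hz with ⟨x, hx, rfl⟩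
        rcases Finset.mem_sdiff.1 hx with ⟨hx1, hx2⟩
        exact hx2 (Finset.mem_filter.2 ⟨hx1, hz'⟩)
      have f3 : (X + insert c C').card + Xc.card = (X + C').card + X.card := by
        rw [f1, Finset.card_union_of_disjoint f2, card_image_add,
          Finset.card_sdiff_of_subset hXcX]
        have := Finset.card_le_card hXcX
        omega
      -- structure of A + X + insert c C'
      have f4 : (A + Xc).image (· + c) ⊆ A + X + C' := by
        intro z hz
        rcases Finset.mem_image.1 hz with ⟨y, hy, rfl⟩
        rcases Finset.mem_add.1 hy with ⟨a, ha, x, hx, rfl⟩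
        have hxc : x + c ∈ X + C' := (Finset.mem_filter.1 hx).2
        have hassoc : A + X + C' = A + (X + C') := add_assoc _ _ _
        rw [hassoc, add_assoc]
        exact Finset.add_mem_add ha hxc
      have hAXcAX : A + Xc ⊆ A + X := Finset.add_subset_add_left hXcX
      have f5 : (A + X + insert c C').card + (A + Xc).card
          ≤ (A + X + C').card + (A + X).card := by
        have hcover : A + X + insert c C'
            ⊆ (A + X + C') ∪ ((A + X) \ (A + Xc)).image (· + c) := by
          rw [add_insert']
          intro z hz
          rcases Finset.mem_union.1 hz with hz | hz
          · exact Finset.mem_union_left _ hz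
          · rcases Finset.mem_image.1 hz with ⟨y, hy, rfl⟩
            by_cases hyc : y ∈ A + Xc
            · exact Finset.mem_union_left _ (f4 (Finset.mem_image.2 ⟨y, hyc, rfl⟩))
            · exact Finset.mem_union_right _
                (Finset.mem_image.2 ⟨y, Finset.mem_sdiff.2 ⟨hy, hyc⟩, rfl⟩)
        have h1 := Finset.card_le_card hcover
        have h2 := Finset.card_union_le (A + X + C') (((A + X) \ (A + Xc)).image (· + c))
        rw [card_image_add, Finset.card_sdiff_of_subset hAXcAX] at h2
        have h3 := Finset.card_le_card hAXcAX
        omega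
      -- lower bound on |A + Xc|
      have f6 : K * Xc.card ≤ ((A + Xc).card : ℝ) := by
        rcases Finset.eq_empty_or_nonempty Xc with hE | hNE
        · simp [hE]
        · rcases eq_or_ne Xc X with hEq | hNe
          · rw [hEq]; exact le_of_eq hK.symm
          · exact le_of_lt (h Xc hXcX hNE hNe)
      -- real-cast versions
      have f3' : ((X + insert c C').card : ℝ) + Xc.card = (X + C').card + X.card := by
        exact_mod_cast f3
      have f5' : ((A + X + insert c C').card : ℝ) + (A + Xc).card
          ≤ (A + X + C').card + (A + X).card := by exact_mod_cast f5
      have f3K : K * ((X + insert c C').card : ℝ) + K * (Xc.card : ℝ)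
          = K * ((X + C').card : ℝ) + K * (X.card : ℝ) := by
        rw [← mul_add, ← mul_add, f3']
      obtain ⟨ihle, iheq⟩ := ih
      constructor
      · linarith [ihle, hK, f6, f3K, f5']
      · intro heq
        -- equality forces each step to be tight
        have e1 : ((A + X + C').card : ℝ) = K * (X + C').card := by
          linarith [ihle, hK, f6, f3K, f5', heq]
        have e2 : ((A + Xc).card : ℝ) = K * Xc.card := by
          linarith [ihle, hK, f6, f3K, f5', heq]
        obtain ⟨Q', hQ'sub, hXQ', hcard'⟩ := iheq e1
        have hXcCases : Xc = ∅ ∨ Xc = X := by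
          rcases Finset.eq_empty_or_nonempty Xc with hE | hNE
          · exact Or.inl hE
          · rcases eq_or_ne Xc X with hEq | hNe
            · exact Or.inr hEq
            · exact absurd e2 (ne_of_gt (h Xc hXcX hNE hNe))
        rcases hXcCases with hE | hEq
        · -- Xc = ∅ : c contributes a fully disjoint translate
          have hmc : (A + Xc).card = 0 := by simp [hE]
          have hacard : (A + X + insert c C').card = (A + X + C').card + (A + X).card := by
            have hle : (A + X + insert c C').card ≤ (A + X + C').card + (A + X).card := by
              omega
            have hge : ((A + X + C').card : ℝ) + (A + X).card
                ≤ ((A + X + insert c C').card : ℝ) := by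
              have hnc : K * (Xc.card : ℝ) = 0 := by rw [hE]; simp
              linarith [heq, e1, hK, f3K, hnc]
            have hge' : (A + X + C').card + (A + X).card ≤ (A + X + insert c C').card := by
              exact_mod_cast hge
            omega
          -- disjointness of A+X+C' and (A+X).image (·+c)
          have hdisj : Disjoint (A + X + C') ((A + X).image (· + c)) := by
            have hu : A + X + insert c C' = (A + X + C') ∪ (A + X).image (· + c) :=
              add_insert' _ _ _
            have := Finset.card_union_add_card_inter (A + X + C') ((A + X).image (· + c))
            rw [← hu, hacard, card_image_add] at this
            have hint : ((A + X + C') ∩ (A + X).image (· + c)).card = 0 := by omega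
            rw [Finset.card_eq_zero] at hint
            exact Finset.disjoint_iff_inter_eq_empty.2 hint
          refine ⟨insert c Q', Finset.insert_subset_insert c hQ'sub, ?_, ?_⟩
          · rw [add_insert', add_insert', ← hXQ']
          · have hdisj' : Disjoint (A + X + Q') ((A + X).image (· + c)) :=
              hdisj.mono_left (Finset.add_subset_add_left hQ'sub)
            have hcQ' : c ∉ Q' := fun hmem => hc (hQ'sub hmem)
            rw [add_insert', Finset.card_union_of_disjoint hdisj', card_image_add,
              hcard', Finset.card_insert_of_notMem hcQ', Nat.mul_add, Nat.mul_one]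
        · -- Xc = X : c + X is already covered, reuse Q'
          have hsub2 : X + insert c C' = X + C' := by
            rw [f1, hEq]
            simp
          refine ⟨Q', hQ'sub.trans (Finset.subset_insert c C'), ?_, hcard'⟩
          rw [hsub2, hXQ']

end PetridisAux

theorem stmt_7 {Z : Type*} [AddCommGroup Z] [DecidableEq Z] (A X C : Finset Z)
    (hA : A.Nonempty) (hX : X.Nonempty) (K : ℝ)
    (hK : ((A + X).card : ℝ) = K * X.card)
    (h : ∀ X' ⊆ X, X'.Nonempty → X' ≠ X → K * X'.card < ((A + X').card : ℝ))
    (heq : ((A + X + C).card : ℝ) = K * (X + C).card) :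
    ∃ Q ⊆ C, X + C = X + Q ∧ (A + X + Q).card = (A + X).card * Q.card :=
  (PetridisAux.petridis_main A X hA hX K hK h C).2 heq
end

section
/- For a finite nonempty subset A of a commutative group Z, σ(A) = δ(A)² if and only if σ(A) = 1. Equivalently: |A+A|·|A| = |A−A|² if and only if |A+A| = |A|. -/
/-!
Write `k = |A|`, `d = |A - A|`, `s = |A + A|`. If `d² ≤ s k`, every inequality in Petridis' proof
of `s k ≤ d²` is tight: `-A` itself minimises `|X + A| / |X|` over the nonempty `X ⊆ -A`, and
`|-A + A + A| k = d²`. Running Petridis' induction from a pair `{x, y} ⊆ A` up to `A`, instead of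
from `∅`, then gives `k² ≤ d r(y - x)`, where `r(t)` counts the representations `t = b - a` with
`a, b ∈ A`. Since `r(0) = k` and the `r(t)` sum to `k²`, averaging over the `d - 1` nonzero
differences forces `d ≤ k`. Conversely, `s = k` gives `d k ≤ s² = k²` by Ruzsa's triangle
inequality.
-/

open Pointwise Finset

theorem card_le_of_sq_le_card_mul {ι : Type*} [DecidableEq ι] {T : Finset ι} {f : ι → ℕ}
    {i₀ : ι} {k : ℕ} (hk : 0 < k) (hi₀ : i₀ ∈ T) (hf : f i₀ = k) (hsum : ∑ i ∈ T, f i = k ^ 2)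
    (hle : ∀ i ∈ T, k ^ 2 ≤ #T * f i) : #T ≤ k := by
  have hrest : #(T.erase i₀) * k ^ 2 ≤ #T * ∑ i ∈ T.erase i₀, f i := by
    rw [mul_sum]
    exact card_nsmul_le_sum _ _ _ fun i hi ↦ hle i (mem_of_mem_erase hi)
  have hsplit := add_sum_erase T f hi₀
  have hcard := card_erase_add_one hi₀
  rw [hf, hsum] at hsplit
  have : #T * k ≤ k * k := by nlinarith
  exact Nat.le_of_mul_le_mul_right this hk

section Sumsets
variable {Z : Type*} [AddCommGroup Z] [DecidableEq Z]

section Petridis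
variable {U B : Finset Z}

theorem pluennecke_petridis_inequality_add_insert
    (hU : ∀ X ⊆ U, #(U + B) * #X ≤ #(X + B) * #U) (W : Finset Z) (z : Z) :
    #(U + B) * #(U + W) + #(U + B + insert z W) * #U ≤
      #(U + B) * #(U + insert z W) + #(U + B + W) * #U := by
  -- `U₁ + {z}` is the overlap of `U + {z}` with `U + W`, so adding `z` to `W` adds
  -- `|U| - |U₁|` elements to `U + W` and at most `|U + B| - |U₁ + B|` elements to `U + B + W`.
  set U₁ := {u ∈ U | u + z ∈ U + W}
  have hU₁ : U₁ + {z} = (U + {z}) ∩ (U + W) := by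
    ext v
    simp only [U₁, mem_inter, mem_add, mem_filter, mem_singleton]
    constructor
    · rintro ⟨u, ⟨hu, hw⟩, _, rfl, rfl⟩
      exact ⟨⟨u, hu, _, rfl, rfl⟩, hw⟩
    · rintro ⟨⟨u, hu, _, rfl, rfl⟩, hw⟩
      exact ⟨u, ⟨hu, hw⟩, _, rfl, rfl⟩
  have hcard : #(U + insert z W) + #U₁ = #U + #(U + W) := by
    rw [insert_eq, add_union, ← card_add_singleton U₁ z, hU₁, card_union_add_card_inter,
      card_add_singleton]
  have hsub : U₁ + B + {z} ⊆ (U + B + {z}) ∩ (U + B + W) := by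
    refine subset_inter (by gcongr; exact filter_subset _ _) ?_
    rw [add_right_comm U₁, add_right_comm U B]
    exact add_subset_add_right (hU₁ ▸ inter_subset_right)
  have hcardB : #(U + B + insert z W) + #(U₁ + B) ≤ #(U + B) + #(U + B + W) :=
    calc #(U + B + insert z W) + #(U₁ + B)
        = #((U + B + {z}) ∪ (U + B + W)) + #(U₁ + B + {z}) := by
          rw [insert_eq, add_union, card_add_singleton]
      _ ≤ #((U + B + {z}) ∪ (U + B + W)) + #((U + B + {z}) ∩ (U + B + W)) := by
          gcongr
      _ = #(U + B) + #(U + B + W) := by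
          rw [card_union_add_card_inter, card_add_singleton]
  have hmin := hU U₁ (filter_subset _ _)
  have h₁ := congrArg (#(U + B) * ·) hcard
  have h₂ := Nat.mul_le_mul_right #U hcardB
  simp only [mul_add, add_mul] at h₁ h₂
  linarith

theorem pluennecke_petridis_inequality_add_of_subset
    (hU : ∀ X ⊆ U, #(U + B) * #X ≤ #(X + B) * #U) {W W' : Finset Z} (hWW' : W ⊆ W') :
    #(U + B) * #(U + W) + #(U + B + W') * #U ≤ #(U + B) * #(U + W') + #(U + B + W) * #U := by
  rw [← union_eq_right.2 hWW']
  clear hWW'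
  induction W' using Finset.induction_on with
  | empty => simp
  | insert z C _ ih =>
    rw [union_insert]
    linarith [pluennecke_petridis_inequality_add_insert hU (W ∪ C) z]

end Petridis

theorem exists_subset_forall_card_add_mul_le (A : Finset Z) {B : Finset Z} (hB : B.Nonempty) :
    ∃ U ⊆ B, U.Nonempty ∧ #(U + A) * #B ≤ #(B + A) * #U ∧
      ∀ X ⊆ U, #(U + A) * #X ≤ #(X + A) * #U := by
  have hB' : B ∈ B.powerset.erase ∅ := mem_erase_of_ne_of_mem hB.ne_empty (mem_powerset_self _)
  obtain ⟨U, hU, hUmin⟩ :=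
    exists_min_image (B.powerset.erase ∅) (fun X ↦ (#(X + A) : ℚ) / #X) ⟨B, hB'⟩
  rw [mem_erase, mem_powerset, ← nonempty_iff_ne_empty] at hU
  have hratio : ∀ X ⊆ B, X.Nonempty → #(U + A) * #X ≤ #(X + A) * #U := by
    intro X hXB hX
    have h := hUmin X (mem_erase_of_ne_of_mem hX.ne_empty (mem_powerset.2 hXB))
    rw [div_le_div_iff₀ (by exact_mod_cast hU.1.card_pos) (by exact_mod_cast hX.card_pos)] at h
    exact_mod_cast h
  refine ⟨U, hU.2, hU.1, hratio B subset_rfl hB, fun X hXU ↦ ?_⟩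
  obtain rfl | hX := X.eq_empty_or_nonempty
  · simp
  · exact hratio X (hXU.trans hU.2) hX

theorem card_add_pair_add_card_inter (S : Finset Z) (x y : Z) :
    #({x, y} + S) + #((x +ᵥ S) ∩ (y +ᵥ S)) = 2 * #S := by
  rw [insert_eq, union_add, singleton_add, singleton_add, card_union_add_card_inter,
    card_vadd_finset, card_vadd_finset, two_mul]

theorem sum_addConvolution (A B : Finset Z) :
    ∑ t ∈ A + B, A.addConvolution B t = #A * #B := by
  rw [← card_product]
  exact (card_eq_sum_card_fiberwise fun p hp ↦
    add_mem_add (mem_product.1 hp).1 (mem_product.1 hp).2).symm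

variable {A : Finset Z}

theorem forall_card_neg_add_mul_le_of_sq_le (hA : A.Nonempty)
    (h : #(A - A) ^ 2 ≤ #(A + A) * #A) :
    ∀ X ⊆ -A, #(-A + A) * #X ≤ #(X + A) * #(-A) := by
  obtain ⟨U, hUA, hU, hUB, hUmin⟩ := exists_subset_forall_card_add_mul_le A hA.neg
  have hpet := pluennecke_petridis_inequality_add A hUmin
  rw [add_comm A U] at hpet
  have hs : #(A + A) ≤ #(U + A + A) := by
    rw [add_assoc]
    exact card_le_card_add_left hU
  rw [neg_add_eq_sub, card_neg] at hUB
  have hk : #A ≤ #U := by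
    have hpos : 0 < #(A + A) * #A * #U := by
      have := hA.card_pos; have := hU.card_pos; have := (hA.add hA).card_pos; positivity
    refine Nat.le_of_mul_le_mul_left ?_ hpos
    calc #(A + A) * #A * #U * #A = #(A + A) * #U * (#A * #A) := by ring
      _ ≤ #(U + A) * #(U + A) * (#A * #A) :=
          Nat.mul_le_mul_right _ ((Nat.mul_le_mul_right _ hs).trans hpet)
      _ = (#(U + A) * #A) ^ 2 := by ring
      _ ≤ (#(A - A) * #U) ^ 2 := by gcongr
      _ = #(A - A) ^ 2 * (#U * #U) := by ring
      _ ≤ #(A + A) * #A * #U * #U := by rw [mul_assoc _ #U]; gcongr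
  obtain rfl : U = -A := eq_of_subset_of_card_le hUA (by rwa [card_neg])
  exact hUmin

theorem sq_card_le_card_sub_mul_addConvolution (hA : A.Nonempty)
    (h : #(A - A) ^ 2 ≤ #(A + A) * #A) {x y : Z} (hx : x ∈ A) (hy : y ∈ A) :
    #A ^ 2 ≤ #(A - A) * (-A).addConvolution A (-x + y) := by
  have hmin := forall_card_neg_add_mul_le_of_sq_le hA h
  have hpet := pluennecke_petridis_inequality_add_of_subset hmin (empty_subset A)
  have hpair := pluennecke_petridis_inequality_add_of_subset hmin (W := {x, y}) (W' := A)
    (by simp [insert_subset_iff, hx, hy])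
  simp only [add_empty, card_empty, mul_zero, zero_add] at hpet
  rw [neg_add_eq_sub, card_neg] at hpet hpair
  rw [add_comm (-A), add_comm (A - A) {x, y}] at hpair
  have hs : #(A + A) ≤ #(A - A + A) := by
    rw [← neg_add_eq_sub, add_assoc]
    exact card_le_card_add_left hA.neg
  have hI := card_add_pair_add_card_inter (-A) x y
  rw [card_vadd_inter_vadd, neg_neg, card_neg] at hI
  have hJ := card_add_pair_add_card_inter (A - A) x y
  have hsub : A ⊆ (x +ᵥ (A - A)) ∩ (y +ᵥ (A - A)) := by
    intro a ha
    simp only [mem_inter, mem_vadd_finset, vadd_eq_add]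
    exact ⟨⟨a - x, sub_mem_sub ha hx, by abel⟩, ⟨a - y, sub_mem_sub ha hy, by abel⟩⟩
  have h₁ := Nat.mul_le_mul_right #A (card_le_card hsub)
  have h₂ := congrArg (#(A - A) * ·) hI
  have h₃ := congrArg (· * #A) hJ
  simp only [mul_add, add_mul] at h₂ h₃
  nlinarith

theorem card_sub_le_card_of_sq_le (hA : A.Nonempty) (h : #(A - A) ^ 2 ≤ #(A + A) * #A) :
    #(A - A) ≤ #A := by
  obtain ⟨a, ha⟩ := id hA
  rw [← neg_add_eq_sub]
  refine card_le_of_sq_le_card_mul hA.card_pos (i₀ := 0) (f := (-A).addConvolution A)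
    (neg_add_cancel a ▸ add_mem_add (neg_mem_neg ha) ha) ?_ ?_ fun t ht ↦ ?_
  · simpa using (card_vadd_inter_vadd (-A) (-A) 0 0).symm
  · rw [sum_addConvolution, card_neg, sq]
  · obtain ⟨x', hx', y, hy, rfl⟩ := mem_add.1 ht
    obtain ⟨x, hx, rfl⟩ := mem_neg.1 hx'
    rw [neg_add_eq_sub]
    exact sq_card_le_card_sub_mul_addConvolution hA h hx hy

end Sumsets

theorem stmt_9 {Z : Type*} [AddCommGroup Z] [DecidableEq Z] (A : Finset Z)
    (hA : A.Nonempty) :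
    (A + A).card * A.card = (A - A).card ^ 2 ↔ (A + A).card = A.card := by
  constructor
  · intro h
    have hd := le_antisymm (card_sub_le_card_of_sq_le hA h.ge) card_le_card_sub_self
    rw [hd, sq] at h
    exact Nat.eq_of_mul_eq_mul_right hA.card_pos h
  · intro h
    have hd : #(A - A) * #A ≤ #A * #A := h ▸ ruzsa_triangle_inequality_sub_add_add A A A
    rw [h, sq, le_antisymm (Nat.le_of_mul_le_mul_right hd hA.card_pos) card_le_card_sub_self]
end

section
/- For a finite nonempty subset A of a commutative group Z, σ(A) = δ(A)² or δ(A) = σ(A)² holds if and only if A is a coset of a finite subgroup of Z (equivalently, σ(A) = δ(A) = 1). -/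
/-!
Write `r_S(g) = #{(a, b) ∈ S × S | a - b = g}`.

`δ = σ²` is the equality case of Ruzsa's inequality `|A - A| |A| ≤ |A + A|²`: choosing
`d = p d - q d` with `p d, q d ∈ A`, the injection `(d, a) ↦ (a + p d, a + q d)` of
`(A - A) × A` into `(A + A)²` becomes surjective, and only `d = 0` reaches the diagonal, so
`|A + A| ≤ |A|`.

`σ = δ²` is the equality case of `|A + A| |A| ≤ |A - A|²`, which comes from the
Plünnecke–Petridis inequality for a subset `U ⊆ A` minimising `|U - A| / |U|`. Equality forces
`U = A`, and then Petridis' inequality `|A - A - T| |A| ≤ |A - A| |A - T|` is an equality for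
`T = A`, hence for every `T ⊆ A`, because its slack is monotone in `T`. For `T = {t, t'}` this
reads `|A| r_{A-A}(g) = |A - A| r_A(g)` with `g = t - t'`. Summing over `g ∈ A - A`, where
`r_{A-A}(0) = |A - A|` and `r_{A-A}(g) ≥ |A|` by Petridis for `T = A ∩ (A - g)`, gives
`|A - A| ≤ |A|`.

In both cases `|A + A| = |A|`, so `A` is a coset of its stabiliser.
-/

open Pointwise Finset

namespace Finset

section AddGroup
variable {G : Type*} [AddGroup G]

lemma mem_of_coe_eq_vadd {A : Finset G} {H : AddSubgroup G} {z : G}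
    (hAH : (A : Set G) = z +ᵥ (H : Set G)) : z ∈ A := by
  simpa [← mem_coe, hAH] using Set.vadd_mem_vadd_set (a := z) H.zero_mem

variable [DecidableEq G] {A B : Finset G}

lemma exists_coe_eq_vadd_addSubgroup_of_card_add_le (hA : A.Nonempty) (h : #(A + A) ≤ #A) :
    ∃ (H : AddSubgroup G) (z : G), (H : Set G).Finite ∧ (A : Set G) = z +ᵥ (H : Set G) := by
  obtain ⟨a, ha⟩ := hA
  have hcoset := vadd_stabilizer_of_no_doubling h ha
  exact ⟨_, a, Set.Finite.of_vadd_set (hcoset ▸ A.finite_toSet), hcoset.symm⟩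

/-- Nonnegative by the Plünnecke–Petridis inequality when `A` minimises `#(A' + B) / #A'`
over `A' ⊆ A`. -/
def petridisSlack (A B C : Finset G) : ℤ := #(A + B) * #(C + A) - #(C + A + B) * #A

lemma card_insert_add_add_card_inter (A C : Finset G) (c : G) :
    #(insert c C + A) + #(A ∩ (-c +ᵥ (C + A))) = #(C + A) + #A := by
  have hinter : (c +ᵥ A) ∩ (C + A) = c +ᵥ (A ∩ (-c +ᵥ (C + A))) := by
    rw [vadd_finset_inter, vadd_neg_vadd]
  rw [insert_eq, union_add, singleton_add, ← card_vadd_finset c (A ∩ _), ← hinter,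
    card_union_add_card_inter, card_vadd_finset, add_comm]

lemma card_insert_add_add_add_card_add_le (B C : Finset G) (c : G) {A₁ : Finset G}
    (hA₁ : A₁ ⊆ A) (hcA₁ : c +ᵥ A₁ ⊆ C + A) :
    #(insert c C + A + B) + #(A₁ + B) ≤ #(C + A + B) + #(A + B) := by
  have hsub : c +ᵥ (A₁ + B) ⊆ (c +ᵥ (A + B)) ∩ (C + A + B) := by
    refine subset_inter (vadd_finset_subset_vadd_finset (add_subset_add_right hA₁)) ?_
    rw [← vadd_add_assoc]
    exact add_subset_add_right hcA₁
  have := card_union_add_card_inter (c +ᵥ (A + B)) (C + A + B)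
  have := card_le_card hsub
  rw [insert_eq, union_add, union_add, singleton_add, vadd_add_assoc]
  rw [card_vadd_finset] at *
  omega

lemma petridisSlack_le_insert (hP : ∀ A' ⊆ A, #(A + B) * #A' ≤ #(A' + B) * #A)
    (C : Finset G) (c : G) : petridisSlack A B C ≤ petridisSlack A B (insert c C) := by
  set A₁ := A ∩ (-c +ᵥ (C + A))
  have hA₁ : A₁ ⊆ A := inter_subset_left
  have hcA₁ : c +ᵥ A₁ ⊆ C + A := by simp [A₁, vadd_finset_inter]
  have h₁ := card_insert_add_add_card_inter A C c
  have h₂ := card_insert_add_add_add_card_add_le B C c hA₁ hcA₁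
  have h₃ := hP A₁ hA₁
  unfold petridisSlack
  zify at h₁ h₂ h₃
  linear_combination -(#(A + B) : ℤ) * h₁ + (#A : ℤ) * h₂ + h₃

lemma petridisSlack_mono (hP : ∀ A' ⊆ A, #(A + B) * #A' ≤ #(A' + B) * #A)
    {S C : Finset G} (hSC : S ⊆ C) : petridisSlack A B S ≤ petridisSlack A B C := by
  suffices ∀ D, petridisSlack A B S ≤ petridisSlack A B (D ∪ S) by
    simpa [sdiff_union_of_subset hSC] using this (C \ S)
  intro D
  induction D using Finset.induction_on with
  | empty => simp
  | insert d D _ ih => exact ih.trans (by rw [insert_union]; exact petridisSlack_le_insert hP _ d)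

lemma petridisSlack_nonneg (hP : ∀ A' ⊆ A, #(A + B) * #A' ≤ #(A' + B) * #A)
    (C : Finset G) : 0 ≤ petridisSlack A B C := by
  have := pluennecke_petridis_inequality_add C hP
  unfold petridisSlack
  zify at this
  linarith

lemma exists_subset_forall_card_add_mul_le (B : Finset G) (hA : A.Nonempty) :
    ∃ U ⊆ A, U.Nonempty ∧ ∀ V ⊆ A, #(U + B) * #V ≤ #(V + B) * #U := by
  obtain ⟨U, hU, hmin⟩ := exists_min_image {V ∈ A.powerset | V.Nonempty}
    (fun V ↦ (#(V + B) : ℚ≥0) / #V) ⟨A, by simpa using hA⟩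
  rw [mem_filter, mem_powerset] at hU
  refine ⟨U, hU.1, hU.2, fun V hV ↦ ?_⟩
  obtain rfl | hV₀ := V.eq_empty_or_nonempty
  · simp
  have := hmin V (by simpa using ⟨hV, hV₀⟩)
  rw [div_le_div_iff₀ (by exact_mod_cast hU.2.card_pos) (by exact_mod_cast hV₀.card_pos)] at this
  exact_mod_cast this

lemma sum_addConvolution_neg_self (S : Finset G) :
    ∑ g ∈ S - S, S.addConvolution (-S) g = #S * #S := by
  rw [← card_product, card_eq_sum_card_fiberwise (f := fun p ↦ p.1 - p.2)
    fun p hp ↦ by simpa using sub_mem_sub (mem_product.1 hp).1 (mem_product.1 hp).2]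
  exact sum_congr rfl fun g _ ↦ (card_sub_eq S S g).symm

end AddGroup

section AddCommGroup
variable {G : Type*} [AddCommGroup G]

lemma add_sub_mem_of_coe_eq_vadd {A : Finset G} {H : AddSubgroup G} {z : G}
    (hAH : (A : Set G) = z +ᵥ (H : Set G)) {a b c : G} (ha : a ∈ A) (hb : b ∈ A) (hc : c ∈ A) :
    a + b - c ∈ A := by
  simp only [← mem_coe, hAH, Set.mem_vadd_set_iff_neg_vadd_mem, vadd_eq_add, SetLike.mem_coe]
    at ha hb hc ⊢
  convert H.sub_mem (H.add_mem ha hb) hc using 1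
  abel

variable [DecidableEq G] {A : Finset G}

lemma card_add_self_of_coe_eq_vadd {H : AddSubgroup G} {z : G}
    (hAH : (A : Set G) = z +ᵥ (H : Set G)) : #(A + A) = #A := by
  have hz := mem_of_coe_eq_vadd hAH
  refine le_antisymm ?_ (card_le_card_add_left ⟨z, hz⟩)
  calc #(A + A) ≤ #(A + {z}) := card_le_card fun x hx ↦ by
        obtain ⟨a, ha, b, hb, rfl⟩ := mem_add.1 hx
        exact mem_add.2 ⟨a + b - z, add_sub_mem_of_coe_eq_vadd hAH ha hb hz, z,
          mem_singleton_self z, sub_add_cancel _ _⟩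
    _ = #A := card_add_singleton A z

lemma card_sub_self_of_coe_eq_vadd {H : AddSubgroup G} {z : G}
    (hAH : (A : Set G) = z +ᵥ (H : Set G)) : #(A - A) = #A := by
  have hz := mem_of_coe_eq_vadd hAH
  refine le_antisymm ?_ (card_le_card_sub_right ⟨z, hz⟩)
  calc #(A - A) ≤ #(A - {z}) := card_le_card fun x hx ↦ by
        obtain ⟨a, ha, b, hb, rfl⟩ := mem_sub.1 hx
        exact mem_sub.2 ⟨a + z - b, add_sub_mem_of_coe_eq_vadd hAH ha hz hb, z,
          mem_singleton_self z, by abel⟩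
    _ = #A := by rw [sub_eq_add_neg, neg_singleton, card_add_singleton]

lemma card_add_le_of_sq_le_card_mul_card_sub (h : #(A + A) ^ 2 ≤ #A * #(A - A)) :
    #(A + A) ≤ #A := by
  choose! p hp q hq hpq using fun d (hd : d ∈ A - A) ↦ mem_sub.1 hd
  set F : G × G → G × G := fun x ↦ (x.2 + p x.1, x.2 + q x.1)
  have hF_sub (x : G × G) (hx : x.1 ∈ A - A) : (F x).1 - (F x).2 = x.1 := by
    simp only [F, add_sub_add_left_eq_sub, hpq x.1 hx]
  have hinj : Set.InjOn F ((A - A) ×ˢ A : Finset _) := by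
    intro x hx y hy hxy
    rw [mem_coe, mem_product] at hx hy
    have h₁ : x.1 = y.1 := by rw [← hF_sub x hx.1, ← hF_sub y hy.1, hxy]
    have h₂ : x.2 = y.2 := by
      have := congrArg Prod.fst hxy
      simp only [F, h₁] at this
      exact add_right_cancel this
    exact Prod.ext h₁ h₂
  have himage : ((A - A) ×ˢ A).image F = (A + A) ×ˢ (A + A) := by
    refine eq_of_subset_of_card_le ?_ ?_
    · simp only [image_subset_iff, mem_product, and_imp]
      exact fun x hx ha ↦ ⟨add_mem_add ha (hp _ hx), add_mem_add ha (hq _ hx)⟩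
    · rw [card_image_of_injOn hinj, card_product, card_product, ← sq, mul_comm]
      exact h
  have hdiag : A + A ⊆ A.image (· + p 0) := by
    intro s hs
    obtain ⟨x, hx, hFx⟩ := mem_image.1 (himage ▸ mem_product.2 ⟨hs, hs⟩ :
      (s, s) ∈ ((A - A) ×ˢ A).image F)
    rw [mem_product] at hx
    have hx₀ : x.1 = 0 := by rw [← hF_sub x hx.1, hFx, sub_self]
    exact mem_image.2 ⟨x.2, hx.2, by rw [← hx₀]; exact congrArg Prod.fst hFx⟩
  exact (card_le_card hdiag).trans card_image_le

lemma forall_card_add_neg_mul_le_of_sq_le (hA : A.Nonempty)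
    (h : #(A - A) ^ 2 ≤ #(A + A) * #A) : ∀ V ⊆ A, #(A + -A) * #V ≤ #(V + -A) * #A := by
  obtain ⟨U, hUA, hU, hUmin⟩ := exists_subset_forall_card_add_mul_le (-A) hA
  have hpetridis : #(U - A - A) * #U ≤ #(U - A) * #(U - A) := by
    have := pluennecke_petridis_inequality_add (-A) fun V hV ↦ hUmin V (hV.trans hUA)
    simpa only [add_comm (-A) U, ← sub_eq_add_neg] using this
  have hsumset : #(A + A) ≤ #(U - A - A) := by
    rw [sub_sub]; exact card_le_card_sub_left hU
  have hratio : #(U - A) * #A ≤ #(A - A) * #U := by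
    simpa only [← sub_eq_add_neg] using hUmin A subset_rfl
  have hcard : #A ≤ #U := by
    have hpos : 0 < #(A + A) * #A * #U := by
      have := hA.card_pos; have := hU.card_pos; have := (hA.add hA).card_pos; positivity
    refine le_of_mul_le_mul_left ?_ hpos
    calc #(A + A) * #A * #U * #A = #(A + A) * #U * (#A * #A) := by ring
      _ ≤ #(U - A - A) * #U * (#A * #A) := by gcongr
      _ ≤ #(U - A) * #(U - A) * (#A * #A) := by gcongr
      _ = (#(U - A) * #A) * (#(U - A) * #A) := by ring
      _ ≤ (#(A - A) * #U) * (#(A - A) * #U) := by gcongr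
      _ = #(A - A) ^ 2 * (#U * #U) := by ring
      _ ≤ #(A + A) * #A * (#U * #U) := by gcongr
      _ = #(A + A) * #A * #U * #U := by ring
  obtain rfl := eq_of_subset_of_card_le hUA hcard
  exact hUmin

lemma card_sub_sub_mul_eq_of_sq_le (hA : A.Nonempty) (h : #(A - A) ^ 2 ≤ #(A + A) * #A)
    {T : Finset G} (hT : T ⊆ A) : #(A - A - T) * #A = #(A - A) * #(A - T) := by
  have hP := forall_card_add_neg_mul_le_of_sq_le hA h
  have hslack_neg (C : Finset G) :
      petridisSlack A (-A) (-C) = #(A - A) * #(A - C) - #(A - A - C) * #A := by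
    simp only [petridisSlack, ← sub_eq_add_neg, add_comm (-C) A]
    rw [sub_sub, add_comm C A, ← sub_sub]
  have htop : petridisSlack A (-A) (-A) ≤ 0 := by
    have hsumset : #(A + A) ≤ #(A - A - A) := by rw [sub_sub]; exact card_le_card_sub_left hA
    have := h.trans (Nat.mul_le_mul_right #A hsumset)
    rw [hslack_neg]
    zify [sq] at this
    linarith
  have := le_antisymm ((petridisSlack_mono hP (neg_subset_neg hT)).trans htop)
    (petridisSlack_nonneg hP _)
  rw [hslack_neg] at this
  zify
  linarith

lemma card_sub_pair_add_addConvolution (S : Finset G) (t t' : G) :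
    #(S - {t, t'}) + S.addConvolution (-S) (t - t') = 2 * #S := by
  have hsub (x : G) : S - {x} = -x +ᵥ S := by
    rw [sub_eq_neg_add, neg_singleton, singleton_add]
  have := card_vadd_inter_vadd S S (-t) (-t')
  rw [neg_neg, ← sub_eq_add_neg] at this
  rw [insert_eq, sub_union, hsub, hsub, ← this, card_union_add_card_inter, card_vadd_finset,
    card_vadd_finset, two_mul]

lemma card_le_addConvolution_sub_self (hA : A.Nonempty)
    (h : ∀ T ⊆ A, #(A - A - T) * #A = #(A - A) * #(A - T)) {g : G} (hg : g ∈ A - A) :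
    #A ≤ (A - A).addConvolution (-(A - A)) g := by
  obtain ⟨t, ht, t', ht', rfl⟩ := mem_sub.1 hg
  set T := A ∩ (-(t - t') +ᵥ A)
  have ht'T : t' ∈ T := mem_inter.2 ⟨ht', by
    rwa [mem_neg_vadd_finset_iff, vadd_eq_add, sub_add_cancel]⟩
  have hDT : #(A - A) ≤ #(A - A - T) := card_le_card_sub_right ⟨t', ht'T⟩
  have hAT : A - T ⊆ (A - A) ∩ ((t - t') +ᵥ (A - A)) := by
    intro x hx
    obtain ⟨a, ha, τ, hτ, rfl⟩ := mem_sub.1 hx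
    obtain ⟨hτA, hτ'⟩ := mem_inter.1 hτ
    rw [mem_neg_vadd_finset_iff, vadd_eq_add] at hτ'
    refine mem_inter.2 ⟨sub_mem_sub ha hτA, ?_⟩
    have : a - τ = (t - t') +ᵥ (a - ((t - t') + τ)) := by rw [vadd_eq_add]; abel
    rw [this]
    exact vadd_mem_vadd_finset (sub_mem_sub ha hτ')
  rw [← card_inter_vadd]
  refine le_of_mul_le_mul_left ?_ (hA.sub hA).card_pos
  calc #(A - A) * #A ≤ #(A - A - T) * #A := by gcongr
    _ = #(A - A) * #(A - T) := h T inter_subset_left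
    _ ≤ #(A - A) * #((A - A) ∩ ((t - t') +ᵥ (A - A))) := by gcongr

lemma card_mul_addConvolution_sub_self
    (h : ∀ T ⊆ A, #(A - A - T) * #A = #(A - A) * #(A - T)) {g : G} (hg : g ∈ A - A) :
    #A * (A - A).addConvolution (-(A - A)) g = #(A - A) * A.addConvolution (-A) g := by
  obtain ⟨t, ht, t', ht', rfl⟩ := mem_sub.1 hg
  have hT := h {t, t'} (insert_subset ht (singleton_subset_iff.2 ht'))
  have hD := card_sub_pair_add_addConvolution (A - A) t t'
  have hA := card_sub_pair_add_addConvolution A t t'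
  zify at hT hD hA ⊢
  linear_combination (#A : ℤ) * hD - (#(A - A) : ℤ) * hA - hT

lemma card_sub_le_of_forall_card_sub_sub_mul_eq (hA : A.Nonempty)
    (h : ∀ T ⊆ A, #(A - A - T) * #A = #(A - A) * #(A - T)) : #(A - A) ≤ #A := by
  set D := A - A
  have h0 : (0 : G) ∈ D := by
    obtain ⟨a, ha⟩ := hA
    exact sub_self a ▸ sub_mem_sub ha ha
  have hsum : ∑ g ∈ D, D.addConvolution (-D) g = #D * #A := by
    refine mul_left_cancel₀ hA.card_pos.ne' ?_
    rw [mul_sum, sum_congr rfl fun g hg ↦ card_mul_addConvolution_sub_self h hg, ← mul_sum,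
      sum_addConvolution_neg_self]
    ring
  have hzero : D.addConvolution (-D) 0 = #D := by
    rw [← card_inter_vadd, zero_vadd, inter_self]
  have hrest : #(D.erase 0) * #A ≤ ∑ g ∈ D.erase 0, D.addConvolution (-D) g := by
    rw [← smul_eq_mul]
    exact card_nsmul_le_sum _ _ _ fun g hg ↦
      card_le_addConvolution_sub_self hA h (mem_of_mem_erase hg)
  have hsplit := add_sum_erase D (fun g ↦ D.addConvolution (-D) g) h0
  have hcard := card_erase_add_one h0
  rw [hzero] at hsplit
  nlinarith

end AddCommGroup

end Finset

theorem stmt_10 {Z : Type*} [AddCommGroup Z] [DecidableEq Z] (A : Finset Z)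
    (hA : A.Nonempty) :
    ((A + A).card * A.card = (A - A).card ^ 2 ∨
        A.card * (A - A).card = (A + A).card ^ 2) ↔
      ∃ (H : AddSubgroup Z) (z : Z), (H : Set Z).Finite ∧ (A : Set Z) = z +ᵥ (H : Set Z) := by
  refine ⟨fun h ↦ exists_coe_eq_vadd_addSubgroup_of_card_add_le hA ?_, ?_⟩
  · obtain h | h := h
    · have hsub : #(A - A) ≤ #A := card_sub_le_of_forall_card_sub_sub_mul_eq hA
        fun _ hT ↦ card_sub_sub_mul_eq_of_sq_le hA h.ge hT
      refine le_of_mul_le_mul_right ?_ hA.card_pos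
      calc #(A + A) * #A = #(A - A) ^ 2 := h
        _ ≤ #A * #A := by rw [sq]; exact Nat.mul_le_mul hsub hsub
    · exact card_add_le_of_sq_le_card_mul_card_sub h.ge
  · rintro ⟨H, z, -, hAH⟩
    left
    rw [card_add_self_of_coe_eq_vadd hAH, card_sub_self_of_coe_eq_vadd hAH, sq]
end

section
/- (Plünnecke's inequality) For a finite nonempty subset A of a commutative group Z and n ≥ 1, |nA| ≤ σ(A)ⁿ·|A|, i.e., |nA|·|A|^(n−1) ≤ |A+A|ⁿ, where nA denotes the n-fold sumset A+A+⋯+A. -/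
open Pointwise

theorem stmt_11 {Z : Type*} [AddCommGroup Z] [DecidableEq Z] (A : Finset Z)
    (hA : A.Nonempty) (n : ℕ) (hn : 1 ≤ n) :
    (n • A).card * A.card ^ (n - 1) ≤ (A + A).card ^ n := by
  have h := Finset.pluennecke_ruzsa_inequality_nsmul_add hA A n
  have hApos : (0 : ℚ≥0) < A.card := by exact_mod_cast Finset.card_pos.2 hA
  have : ((n • A).card : ℚ≥0) * A.card ^ (n - 1) ≤ (A + A).card ^ n := by
    calc ((n • A).card : ℚ≥0) * A.card ^ (n - 1)
        ≤ (((A + A).card / A.card : ℚ≥0) ^ n * A.card) * A.card ^ (n - 1) := by gcongr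
      _ = ((A + A).card : ℚ≥0) ^ n / A.card ^ n * A.card ^ n := by
          rw [div_pow]; rw [mul_assoc, ← pow_succ']
          congr 2
          omega
      _ = (A + A).card ^ n := div_mul_cancel₀ _ (by positivity)
  exact_mod_cast this
end

section
/- (Strict Plünnecke inequality) Let A be a finite nonempty subset of a commutative group Z with σ(A) > 1 (i.e., |A+A| > |A|). Then for all n ≥ 1, |nA| < σ(A)ⁿ·|A|, i.e., |nA|·|A|^(n−1) < |A+A|ⁿ. -/
/-!
Compare `σ[A]` with the ratios `σ[A', A] = |A' + A| / |A'|` for nonempty `A' ⊆ A`. If one of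
them is smaller, the Plünnecke–Ruzsa inequality `|nA| ≤ σ[A', A]ⁿ |A'|` already beats
`σ[A]ⁿ |A|`. Otherwise `A` minimises `A' ↦ σ[A', A]`, and Petridis'
iteration gives the stronger bound `|nA| ≤ σ[A]ⁿ⁻¹ |A|`, which is strict because `σ[A] > 1`.
-/

open Pointwise Finset
open scoped Combinatorics.Additive

namespace Finset

variable {G : Type*} [AddCommGroup G] [DecidableEq G] {A B : Finset G}

lemma card_add_mul_card_le_of_forall_addConst_le
    (hmin : ∀ A' ⊆ A, A'.Nonempty → σ[A, B] ≤ σ[A', B]) {A' : Finset G} (hA' : A' ⊆ A) :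
    #(A + B) * #A' ≤ #(A' + B) * #A := by
  obtain rfl | hA'ne := A'.eq_empty_or_nonempty
  · simp
  have hApos : (0 : ℚ≥0) < #A := by exact_mod_cast (hA'ne.mono hA').card_pos
  have hA'pos : (0 : ℚ≥0) < #A' := by exact_mod_cast hA'ne.card_pos
  exact_mod_cast (div_le_div_iff₀ hApos hA'pos).1 (hmin A' hA' hA'ne)

lemma card_add_nsmul_le_addConst_pow_mul_card (hA : A.Nonempty)
    (hmin : ∀ A' ⊆ A, A'.Nonempty → σ[A, B] ≤ σ[A', B]) (n : ℕ) :
    (#(A + n • B) : ℚ≥0) ≤ σ[A, B] ^ n * #A := by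
  have hApos : (0 : ℚ≥0) < #A := by exact_mod_cast hA.card_pos
  induction n with
  | zero => simp
  | succ n ih =>
    refine le_of_mul_le_mul_right ?_ hApos
    calc (#(A + (n + 1) • B) * #A : ℚ≥0)
        = #(n • B + A + B) * #A := by rw [succ_nsmul, ← add_assoc, add_comm A]
      _ ≤ #(A + B) * #(n • B + A) := mod_cast pluennecke_petridis_inequality_add _
          fun _ h ↦ card_add_mul_card_le_of_forall_addConst_le hmin h
      _ ≤ σ[A, B] * #A * (σ[A, B] ^ n * #A) := by
          rw [addConst_mul_card, add_comm (n • B)]; gcongr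
      _ = σ[A, B] ^ (n + 1) * #A * #A := by ring

lemma card_nsmul_lt_of_addConst_lt {A' : Finset G} (hA' : A'.Nonempty) (hA'A : A' ⊆ A)
    (hlt : σ[A', A] < σ[A]) {n : ℕ} (hn : n ≠ 0) : (#(n • A) : ℚ≥0) < σ[A] ^ n * #A :=
  calc (#(n • A) : ℚ≥0)
      ≤ σ[A', A] ^ n * #A' := pluennecke_ruzsa_inequality_nsmul_add hA' A n
    _ ≤ σ[A', A] ^ n * #A := by gcongr
    _ < σ[A] ^ n * #A := by
        gcongr
        exact_mod_cast (hA'.mono hA'A).card_pos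

lemma card_succ_nsmul_lt_of_forall_addConst_le (hA : A.Nonempty) (hσ : 1 < σ[A])
    (hmin : ∀ A' ⊆ A, A'.Nonempty → σ[A] ≤ σ[A', A]) (n : ℕ) :
    (#((n + 1) • A) : ℚ≥0) < σ[A] ^ (n + 1) * #A :=
  calc (#((n + 1) • A) : ℚ≥0)
      = #(A + n • A) := by rw [succ_nsmul, add_comm]
    _ ≤ σ[A] ^ n * #A := card_add_nsmul_le_addConst_pow_mul_card hA hmin n
    _ < σ[A] ^ (n + 1) * #A :=
        mul_lt_mul_of_pos_right (pow_lt_pow_right₀ hσ n.lt_succ_self) (mod_cast hA.card_pos)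

theorem card_nsmul_lt_addConst_pow_mul_card (hA : A.Nonempty) (hσ : 1 < σ[A]) {n : ℕ}
    (hn : n ≠ 0) : (#(n • A) : ℚ≥0) < σ[A] ^ n * #A := by
  by_cases hmin : ∀ A' ⊆ A, A'.Nonempty → σ[A] ≤ σ[A', A]
  · obtain ⟨m, rfl⟩ := Nat.exists_eq_succ_of_ne_zero hn
    exact card_succ_nsmul_lt_of_forall_addConst_le hA hσ hmin m
  · push Not at hmin
    obtain ⟨A', hA'A, hA', hlt⟩ := hmin
    exact card_nsmul_lt_of_addConst_lt hA' hA'A hlt hn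

end Finset

theorem stmt_12 {Z : Type*} [AddCommGroup Z] [DecidableEq Z] (A : Finset Z)
    (hA : A.Nonempty) (hσ : A.card < (A + A).card) (n : ℕ) (hn : 1 ≤ n) :
    (n • A).card * A.card ^ (n - 1) < (A + A).card ^ n := by
  have hApos : (0 : ℚ≥0) < #A := by exact_mod_cast hA.card_pos
  have hσ' : 1 < σ[A] := by
    rw [addConst, one_lt_div hApos]
    exact_mod_cast hσ
  have key := card_nsmul_lt_addConst_pow_mul_card hA hσ' (n := n) (by omega)
  suffices (#(n • A) * #A ^ (n - 1) : ℚ≥0) < #(A + A) ^ n by exact_mod_cast this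
  calc (#(n • A) * #A ^ (n - 1) : ℚ≥0)
      < σ[A] ^ n * #A * #A ^ (n - 1) := by gcongr
    _ = (σ[A] * #A) ^ n := by
        rw [mul_assoc, ← pow_succ', Nat.sub_add_cancel hn, mul_pow]
    _ = #(A + A) ^ n := by rw [addConst_mul_card]
end

section
/- For a finite nonempty subset A of a commutative group Z and n ≥ 1, equality holds in Plünnecke's inequality |nA| ≤ σ(A)ⁿ·|A| for some n ≥ 2 if and only if A is a coset of a finite subgroup of Z. -/
/-!
If `|nA| |A|^(n-1) = |A+A|^n`, run Petridis' proof of Plünnecke's inequality: a nonempty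
`C ⊆ A` minimising `|C + A| / |C|` satisfies `|nA| ≤ |C + nA| ≤ σ(A)^n |C|`, so equality forces
`C = A`. Then `A` itself obeys the Petridis bound `|A + (n-1)A| ≤ σ(A)^(n-1) |A|`, which against
`|nA| = σ(A)^n |A|` gives `σ(A) ≤ 1`, and a set with no doubling is a coset of its stabiliser.
Conversely a coset `A` of a finite subgroup has `A + A` a translate of `A`, so `σ(A) = 1`.
-/

open Pointwise Finset

namespace Finset

theorem exists_subset_forall_card_add_mul_card_le {Z : Type*} [Add Z] [DecidableEq Z]
    {A : Finset Z} (hA : A.Nonempty) (B : Finset Z) :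
    ∃ C ⊆ A, C.Nonempty ∧ #(C + B) * #A ≤ #(A + B) * #C ∧
      ∀ C' ⊆ C, #(C + B) * #C' ≤ #(C' + B) * #C := by
  let ratio : Finset Z → ℚ≥0 := fun C ↦ #(C + B) / #C
  have hA' : A ∈ A.powerset.erase ∅ := mem_erase_of_ne_of_mem hA.ne_empty (mem_powerset_self _)
  obtain ⟨C, hC, hCmin⟩ := exists_min_image (A.powerset.erase ∅) ratio ⟨A, hA'⟩
  rw [mem_erase, mem_powerset, ← nonempty_iff_ne_empty] at hC
  obtain ⟨hCne, hCA⟩ := hC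
  have ratio_le {C' : Finset Z} (hC' : C'.Nonempty) (hC'A : C' ⊆ A) :
      #(C + B) * #C' ≤ #(C' + B) * #C := by
    have h := hCmin C' (mem_erase_of_ne_of_mem hC'.ne_empty (mem_powerset.2 hC'A))
    exact_mod_cast (div_le_div_iff₀ (by simpa using hCne.card_pos)
      (by simpa using hC'.card_pos)).1 h
  refine ⟨C, hCA, hCne, ratio_le hA Subset.rfl, fun C' hC'C ↦ ?_⟩
  obtain rfl | hC' := C'.eq_empty_or_nonempty
  · simp
  exact ratio_le hC' (hC'C.trans hCA)

variable {Z : Type*} [AddCommGroup Z] [DecidableEq Z]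

theorem card_add_nsmul_mul_pow_le {A B : Finset Z}
    (hAB : ∀ A' ⊆ A, #(A + B) * #A' ≤ #(A' + B) * #A) (m : ℕ) :
    #(A + m • B) * #A ^ m ≤ #(A + B) ^ m * #A := by
  induction m with
  | zero => simp
  | succ m ih =>
    have petridis : #(A + (m + 1) • B) * #A ≤ #(A + B) * #(A + m • B) := by
      have h := pluennecke_petridis_inequality_add (m • B) hAB
      rwa [add_comm (m • B) A, add_assoc, ← succ_nsmul] at h
    calc #(A + (m + 1) • B) * #A ^ (m + 1)
        = #(A + (m + 1) • B) * #A * #A ^ m := by ring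
      _ ≤ #(A + B) * (#(A + m • B) * #A ^ m) := by
        rw [← mul_assoc]; exact Nat.mul_le_mul_right _ petridis
      _ ≤ #(A + B) * (#(A + B) ^ m * #A) := Nat.mul_le_mul_left _ ih
      _ = #(A + B) ^ (m + 1) * #A := by ring

theorem card_add_self_le_of_card_nsmul_mul_eq {A : Finset Z} (hA : A.Nonempty) {n : ℕ}
    (hn : 1 ≤ n) (h : #(n • A) * #A ^ (n - 1) = #(A + A) ^ n) : #(A + A) ≤ #A := by
  obtain ⟨C, hCA, hC, hC_ratio, hCmin⟩ := exists_subset_forall_card_add_mul_card_le hA A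
  have hpow (k : ℕ) : k ^ n = k ^ (n - 1) * k := by rw [← pow_succ, Nat.sub_add_cancel hn]
  have hCA_eq : C = A := by
    have hpos : 0 < #(n • A) * #C ^ n * #A ^ (n - 1) := by
      have := (hA.nsmul (n := n)).card_pos
      have := hC.card_pos
      have := hA.card_pos
      positivity
    refine eq_of_subset_of_card_le hCA (Nat.le_of_mul_le_mul_left ?_ hpos)
    calc #(n • A) * #C ^ n * #A ^ (n - 1) * #A
        = #(n • A) * #C ^ n * #A ^ n := by rw [hpow #A, mul_assoc _ (#A ^ (n - 1))]
      _ ≤ #(C + n • A) * #C ^ n * #A ^ n :=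
        Nat.mul_le_mul_right _ (Nat.mul_le_mul_right _ (card_le_card_add_left hC))
      _ ≤ #(C + A) ^ n * #C * #A ^ n :=
        Nat.mul_le_mul_right _ (card_add_nsmul_mul_pow_le hCmin n)
      _ = (#(C + A) * #A) ^ n * #C := by ring
      _ ≤ (#(A + A) * #C) ^ n * #C := by gcongr
      _ = #(n • A) * #C ^ n * #A ^ (n - 1) * #C := by rw [mul_pow, ← h]; ring
  subst hCA_eq
  have hbound := card_add_nsmul_mul_pow_le hCmin (n - 1)
  rw [← succ_nsmul', Nat.sub_add_cancel hn, h, hpow] at hbound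
  exact Nat.le_of_mul_le_mul_left hbound (pow_pos (hC.add hC).card_pos _)

theorem card_add_self_eq_of_coe_eq_vadd_addSubgroup {A : Finset Z} {H : AddSubgroup Z} {z : Z}
    (hA : (A : Set Z) = z +ᵥ (H : Set Z)) : #(A + A) = #A := by
  suffices A + A = z +ᵥ A by rw [this, card_vadd_finset]
  apply coe_injective
  rw [coe_add, coe_vadd_finset, hA, vadd_add_vadd_comm, coe_add_coe, add_vadd]

end Finset

theorem stmt_13 {Z : Type*} [AddCommGroup Z] [DecidableEq Z] (A : Finset Z)
    (hA : A.Nonempty) :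
    (∃ n, 2 ≤ n ∧ (n • A).card * A.card ^ (n - 1) = (A + A).card ^ n) ↔
      ∃ (H : AddSubgroup Z) (z : Z), (H : Set Z).Finite ∧ (A : Set Z) = z +ᵥ (H : Set Z) := by
  constructor
  · rintro ⟨n, hn, h⟩
    obtain ⟨a, ha⟩ := hA
    have hcoset := vadd_stabilizer_of_no_doubling
      (card_add_self_le_of_card_nsmul_mul_eq ⟨a, ha⟩ (by omega) h) ha
    refine ⟨AddAction.stabilizer Z A, a, ?_, hcoset.symm⟩
    refine Set.Finite.of_finite_image ?_ (AddAction.injective a).injOn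
    rw [Set.image_vadd, hcoset]
    exact A.finite_toSet
  · rintro ⟨H, z, -, hA⟩
    refine ⟨2, le_rfl, ?_⟩
    rw [two_nsmul, card_add_self_eq_of_coe_eq_vadd_addSubgroup hA]
    ring
end

section
/- Let A and X be finite nonempty subsets of a commutative group Z such that X minimizes the ratio |A+X'|/|X'| over all nonempty subsets X' ⊆ X, with K = |A+X|/|X|. Then |nA+X| ≤ Kⁿ·|X| for all n ≥ 1. -/
/-!
Petridis' form of Plünnecke's inequality says that when `X` minimises `|A + X'| / |X'|` among its
nonempty subsets, `|C + X + A| |X| ≤ |X + A| |C + X|` for every `C`. Taking `C = nA` gives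
`|(n + 1)A + X| ≤ K |nA + X|`, and the bound follows by induction on `n`.
-/

open Pointwise Finset

namespace Finset

variable {G : Type*} [AddCommGroup G] [DecidableEq G] {A X : Finset G}

theorem card_nsmul_add_le_of_forall_subset
    (hX : ∀ X' ⊆ X, #(A + X) * #X' ≤ #(A + X') * #X) (n : ℕ) :
    (#(n • A + X) : ℝ) ≤ (#(A + X) / #X : ℝ) ^ n * #X := by
  obtain rfl | hXne := X.eq_empty_or_nonempty
  · simp
  have hXpos : (0 : ℝ) < #X := by exact_mod_cast hXne.card_pos
  have hpetridis (C : Finset G) : (#(C + X + A) : ℝ) * #X ≤ #(A + X) * #(C + X) := by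
    rw [add_comm A X]
    exact_mod_cast pluennecke_petridis_inequality_add C (by simpa only [add_comm _ A] using hX)
  induction n with
  | zero => simp
  | succ n ih =>
    refine le_of_mul_le_mul_right ?_ hXpos
    calc (#((n + 1) • A + X) : ℝ) * #X
        = #(n • A + X + A) * #X := by rw [succ_nsmul, add_right_comm]
      _ ≤ #(A + X) * #(n • A + X) := hpetridis _
      _ ≤ #(A + X) * ((#(A + X) / #X) ^ n * #X) := by gcongr
      _ = (#(A + X) / #X) ^ (n + 1) * #X * #X := by
          rw [pow_succ, mul_assoc _ (_ / _), div_mul_cancel₀ _ hXpos.ne']; ring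

end Finset

theorem stmt_14_general {Z : Type*} [AddCommGroup Z] [DecidableEq Z] (A X : Finset Z)
    (hX : X.Nonempty) (K : ℝ)
    (hK : ((A + X).card : ℝ) = K * X.card)
    (h : ∀ X' ⊆ X, X'.Nonempty → K * X'.card ≤ ((A + X').card : ℝ)) :
    ∀ n : ℕ, 1 ≤ n → ((n • A + X).card : ℝ) ≤ K ^ n * X.card := by
  have hXpos : (0 : ℝ) < #X := by exact_mod_cast hX.card_pos
  have hmin : ∀ X' ⊆ X, #(A + X) * #X' ≤ #(A + X') * #X := by
    intro X' hX'
    obtain rfl | hX'ne := X'.eq_empty_or_nonempty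
    · simp
    have hX'min := h X' hX' hX'ne
    have : (#(A + X) : ℝ) * #X' ≤ #(A + X') * #X := by
      rw [hK, mul_right_comm]
      gcongr
    exact_mod_cast this
  intro n _
  rw [show K = #(A + X) / #X by rw [hK, mul_div_cancel_right₀ _ hXpos.ne']]
  exact card_nsmul_add_le_of_forall_subset hmin n

theorem stmt_14 {Z : Type*} [AddCommGroup Z] [DecidableEq Z] (A X : Finset Z)
    (hA : A.Nonempty) (hX : X.Nonempty) (K : ℝ)
    (hK : ((A + X).card : ℝ) = K * X.card)
    (h : ∀ X' ⊆ X, X'.Nonempty → K * X'.card ≤ ((A + X').card : ℝ)) :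
    ∀ n : ℕ, 1 ≤ n → ((n • A + X).card : ℝ) ≤ K ^ n * X.card :=
  stmt_14_general A X hX K hK h
end

section
/- For any finite nonempty subset A of a commutative group Z, there exists a nonempty subset X ⊆ −A such that K = |A+X|/|X| satisfies K ≤ δ(A) and |A+X'| ≥ K·|X'| for all nonempty subsets X' ⊆ X. -/
open Pointwise

theorem stmt_17 {Z : Type*} [AddCommGroup Z] [DecidableEq Z] (A : Finset Z)
    (hA : A.Nonempty) :
    ∃ X : Finset Z, X ⊆ -A ∧ X.Nonempty ∧
      ((A + X).card : ℝ) * A.card ≤ ((A - A).card : ℝ) * X.card ∧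
      ∀ X' ⊆ X, X'.Nonempty →
        ((A + X).card : ℝ) * X'.card ≤ ((A + X').card : ℝ) * X.card := by
  classical
  set S : Finset (Finset Z) := (-A).powerset.filter (fun X => X.Nonempty) with hS
  have hSne : S.Nonempty := ⟨-A, by simp [hS, hA]⟩
  obtain ⟨X, hXS, hmin⟩ := S.exists_min_image
    (fun X => ((A + X).card : ℝ) / X.card) hSne
  simp only [hS, Finset.mem_filter, Finset.mem_powerset] at hXS
  obtain ⟨hXsub, hXne⟩ := hXS
  have hXpos : (0 : ℝ) < X.card := by exact_mod_cast hXne.card_pos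
  refine ⟨X, hXsub, hXne, ?_, ?_⟩
  · have h := hmin (-A) (by simp [hS, hA])
    have hApos : (0 : ℝ) < A.card := by exact_mod_cast hA.card_pos
    have hcard : ((-A).card : ℝ) = A.card := by norm_cast; exact Finset.card_neg A
    have hAA : A + -A = A - A := (sub_eq_add_neg A A).symm
    rw [hAA, hcard] at h
    rw [div_le_div_iff₀ hXpos hApos] at h
    linarith
  · intro X' hX' hX'ne
    have h := hmin X' (by
      simp only [hS, Finset.mem_filter, Finset.mem_powerset]
      exact ⟨hX'.trans hXsub, hX'ne⟩)
    have hX'pos : (0 : ℝ) < X'.card := by exact_mod_cast hX'ne.card_pos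
    rw [div_le_div_iff₀ hXpos hX'pos] at h
    linarith
end

section
/- Let A, X be finite nonempty subsets of a commutative group Z with |A+X| = K·|X| and |A+X'| ≥ K·|X'| for all nonempty X' ⊆ X. Then for finite C = {c₁,…,cₘ} with partial sets C_k = {c₁,…,c_k}, and X_k = {x ∈ X : x+A+c_k ⊆ X+A+C_{k−1}}, we have |X+A+C_k| ≤ |X+A+C_{k−1}| + |X+A| − |X_k+A| for each 2 ≤ k ≤ m. -/
open Pointwise

theorem stmt_19 {Z : Type*} [AddCommGroup Z] [DecidableEq Z] (A X : Finset Z)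
    (hA : A.Nonempty) (hX : X.Nonempty) (K : ℝ)
    (hK : ((A + X).card : ℝ) = K * X.card)
    (h : ∀ X' ⊆ X, X'.Nonempty → K * X'.card ≤ ((A + X').card : ℝ))
    (m : ℕ) (c : ℕ → Z) :
    ∀ k, 2 ≤ k → k ≤ m →
      ((X + A + (Finset.Icc 1 k).image c).card : ℤ) ≤
        (X + A + (Finset.Icc 1 (k - 1)).image c).card + (X + A).card -
          ((X.filter fun x =>
              {x} + A + {c k} ⊆ X + A + (Finset.Icc 1 (k - 1)).image c) + A).card := by
  intro k hk2 hkm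
  set B := X + A + (Finset.Icc 1 (k - 1)).image c with hB
  set Xk := X.filter (fun x => {x} + A + {c k} ⊆ B) with hXk
  set S := X + A + {c k} with hS
  -- Icc 1 k = insert k (Icc 1 (k-1))
  have hIcc : Finset.Icc 1 k = insert k (Finset.Icc 1 (k - 1)) := by
    ext x
    simp only [Finset.mem_Icc, Finset.mem_insert]
    omega
  have himg : (Finset.Icc 1 k).image c = insert (c k) ((Finset.Icc 1 (k - 1)).image c) := by
    rw [hIcc, Finset.image_insert]
  have hsplit : X + A + (Finset.Icc 1 k).image c = S ∪ B := by
    rw [himg, Finset.insert_eq, Finset.add_union]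
  -- Xk + A + {c k} ⊆ B
  have hsubB : Xk + A + {c k} ⊆ B := by
    intro z hz
    rw [Finset.mem_add] at hz
    obtain ⟨y, hy, w, hw, rfl⟩ := hz
    rw [Finset.mem_add] at hy
    obtain ⟨x, hx, a, ha, rfl⟩ := hy
    rw [hXk, Finset.mem_filter] at hx
    exact hx.2 (by
      rw [Finset.mem_add]
      exact ⟨x + a, Finset.add_mem_add (Finset.mem_singleton_self x) ha, w, hw, rfl⟩)
  have hsubS : Xk + A + {c k} ⊆ S := by
    apply Finset.add_subset_add_right
    apply Finset.add_subset_add_right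
    exact Finset.filter_subset _ _
  -- card facts
  have hcardS : S.card = (X + A).card := Finset.card_add_singleton _ _
  have hcardXk : (Xk + A + {c k}).card = (Xk + A).card := Finset.card_add_singleton _ _
  have h1 : (S ∪ B).card ≤ B.card + (S \ B).card := by
    rw [Finset.union_comm, ← Finset.union_sdiff_self_eq_union]
    exact Finset.card_union_le _ _
  have h2 : S \ B ⊆ S \ (Xk + A + {c k}) := Finset.sdiff_subset_sdiff le_rfl hsubB
  have h3 : (S \ (Xk + A + {c k})).card = S.card - (Xk + A + {c k}).card :=
    Finset.card_sdiff_of_subset hsubS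
  have h4 : (Xk + A + {c k}).card ≤ S.card := Finset.card_le_card hsubS
  have h5 : (S \ B).card ≤ S.card - (Xk + A + {c k}).card := h3 ▸ Finset.card_le_card h2
  rw [hsplit]
  have := Finset.card_le_card h2
  push_cast [hcardS] at *
  omega
end
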